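/- Let {z^k} be PDHG iterates z^{k+1} = PDHG(z^k) with step-size η < 1/‖A‖₂. Then the fixed-point residual measured in the P-seminorm is non-increasing: for every k ≥ 0, ‖z^{k+2} − z^{k+1}‖_P ≤ ‖z^{k+1} − z^k‖_P. -/

import Mathlib

open Matrix
open scoped BigOperators

noncomputable section

/-- Euclidean norm of a vector in `ℝᵏ`. -/
def nrm {k : ℕ} (v : Fin k → ℝ) : ℝ := Real.sqrt (v ⬝ᵥ v)

/-- Euclidean norm of a primal-dual pair `z = (x, y) ∈ ℝⁿ × ℝᵐ`. -/
def nrmP {n m : ℕ} (z : (Fin n → ℝ) × (Fin m → ℝ)) : ℝ :=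
  Real.sqrt (z.1 ⬝ᵥ z.1 + z.2 ⬝ᵥ z.2)

/-- Spectral norm `‖A‖₂` of a matrix: the supremum of `‖Ax‖₂` over unit vectors `x`. -/
def specNorm {n m : ℕ} (A : Matrix (Fin m) (Fin n) ℝ) : ℝ :=
  sSup {r | ∃ x : Fin n → ℝ, nrm x = 1 ∧ r = nrm (A *ᵥ x)}

/-- Componentwise positive part `[v]⁺`. -/
def posPt {k : ℕ} (v : Fin k → ℝ) : Fin k → ℝ := fun i => max (v i) 0

/-- The Lagrangian `L(x,y) = cᵀx − yᵀAx + bᵀy` of the standard-form LP. -/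
def Lag {n m : ℕ} (A : Matrix (Fin m) (Fin n) ℝ) (b : Fin m → ℝ) (c : Fin n → ℝ)
    (x : Fin n → ℝ) (y : Fin m → ℝ) : ℝ :=
  c ⬝ᵥ x - y ⬝ᵥ (A *ᵥ x) + b ⬝ᵥ y

/-- One PDHG iteration with (equal) step-size `η`:
`x⁺ = proj_{ℝ₊ⁿ}(x + ηAᵀy − ηc)`, `y⁺ = y − ηA(2x⁺ − x) + ηb`. -/
def pdhgStep {n m : ℕ} (A : Matrix (Fin m) (Fin n) ℝ) (b : Fin m → ℝ) (c : Fin n → ℝ)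
    (η : ℝ) (z : (Fin n → ℝ) × (Fin m → ℝ)) : (Fin n → ℝ) × (Fin m → ℝ) :=
  let x' := posPt (z.1 + η • (Aᵀ *ᵥ z.2) - η • c)
  (x', z.2 - η • (A *ᵥ ((2 : ℝ) • x' - z.1)) + η • b)

/-- Quadratic form `wᵀPw` of `P = [[(1/η)Iₙ, Aᵀ], [A, (1/η)Iₘ]]`. -/
def Pquad {n m : ℕ} (A : Matrix (Fin m) (Fin n) ℝ) (η : ℝ)
    (w : (Fin n → ℝ) × (Fin m → ℝ)) : ℝ :=
  (1 / η) * (w.1 ⬝ᵥ w.1) + 2 * (w.2 ⬝ᵥ (A *ᵥ w.1)) + (1 / η) * (w.2 ⬝ᵥ w.2)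

/-- The seminorm `‖w‖_P = √(wᵀPw)`. -/
def Pnorm {n m : ℕ} (A : Matrix (Fin m) (Fin n) ℝ) (η : ℝ)
    (w : (Fin n → ℝ) × (Fin m → ℝ)) : ℝ := Real.sqrt (Pquad A η w)

/-- `σ_max(P)`: the largest eigenvalue of the symmetric matrix `P`, i.e. the
supremum of the Rayleigh quotient `wᵀPw` over unit vectors `w`. -/
def sigmaMaxP {n m : ℕ} (A : Matrix (Fin m) (Fin n) ℝ) (η : ℝ) : ℝ :=
  sSup {r | ∃ w : (Fin n → ℝ) × (Fin m → ℝ), nrmP w = 1 ∧ r = Pquad A η w}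

/-- Application of the matrix `P`: `Pw = ((1/η)w₁ + Aᵀw₂, Aw₁ + (1/η)w₂)`. -/
def Papply {n m : ℕ} (A : Matrix (Fin m) (Fin n) ℝ) (η : ℝ)
    (w : (Fin n → ℝ) × (Fin m → ℝ)) : (Fin n → ℝ) × (Fin m → ℝ) :=
  ((1 / η) • w.1 + Aᵀ *ᵥ w.2, A *ᵥ w.1 + (1 / η) • w.2)

/-- The set `Z*` of saddle points of `L` over `Z = ℝ₊ⁿ × ℝᵐ`:
`L(x*, y) ≤ L(x*, y*) ≤ L(x, y*)` for all `(x, y) ∈ Z`. -/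
def saddleSet {n m : ℕ} (A : Matrix (Fin m) (Fin n) ℝ) (b : Fin m → ℝ) (c : Fin n → ℝ) :
    Set ((Fin n → ℝ) × (Fin m → ℝ)) :=
  {z | (∀ i, 0 ≤ z.1 i) ∧
    (∀ y : Fin m → ℝ, Lag A b c z.1 y ≤ Lag A b c z.1 z.2) ∧
    (∀ x : Fin n → ℝ, (∀ i, 0 ≤ x i) → Lag A b c z.1 z.2 ≤ Lag A b c x z.2)}

/-- Euclidean distance `dist₂(z, S)` from `z` to a set `S`. -/
def dist2 {n m : ℕ} (z : (Fin n → ℝ) × (Fin m → ℝ))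
    (S : Set ((Fin n → ℝ) × (Fin m → ℝ))) : ℝ :=
  sInf ((fun w => nrmP (z - w)) '' S)

/-- `P`-seminorm distance `dist_P(z, S)` from `z` to a set `S`. -/
def distP {n m : ℕ} (A : Matrix (Fin m) (Fin n) ℝ) (η : ℝ)
    (z : (Fin n → ℝ) × (Fin m → ℝ)) (S : Set ((Fin n → ℝ) × (Fin m → ℝ))) : ℝ :=
  sInf ((fun w => Pnorm A η (z - w)) '' S)

/-- KKT error `KKT(z) = ‖(Ax − b, [Aᵀy − c]⁺, [cᵀx − bᵀy]⁺)‖₂`. -/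
def KKTerr {n m : ℕ} (A : Matrix (Fin m) (Fin n) ℝ) (b : Fin m → ℝ) (c : Fin n → ℝ)
    (z : (Fin n → ℝ) × (Fin m → ℝ)) : ℝ :=
  Real.sqrt ((A *ᵥ z.1 - b) ⬝ᵥ (A *ᵥ z.1 - b)
    + posPt (Aᵀ *ᵥ z.2 - c) ⬝ᵥ posPt (Aᵀ *ᵥ z.2 - c)
    + (max (c ⬝ᵥ z.1 - b ⬝ᵥ z.2) 0) ^ 2)

/-- Normalized duality gap `ρ_r(z) = sup_{ẑ ∈ W_r(z)} (L(x, ŷ) − L(x̂, y)) / r`,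
where `W_r(z) = {ẑ ∈ Z : ‖z − ẑ‖₂ ≤ r}`. -/
def rhoGap {n m : ℕ} (A : Matrix (Fin m) (Fin n) ℝ) (b : Fin m → ℝ) (c : Fin n → ℝ)
    (r : ℝ) (z : (Fin n → ℝ) × (Fin m → ℝ)) : ℝ :=
  sSup {g | ∃ w : (Fin n → ℝ) × (Fin m → ℝ), (∀ i, 0 ≤ w.1 i) ∧ nrmP (z - w) ≤ r ∧
    g = (Lag A b c z.1 w.2 - Lag A b c w.1 z.2) / r}

/-- The subdifferential operator
`F(z) = {(c − Aᵀy + g, Ax − b) : g ∈ N_{ℝ₊ⁿ}(x)}`, where `N_{ℝ₊ⁿ}(x)` is the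
normal cone of `ℝ₊ⁿ` at `x ∈ ℝ₊ⁿ` (the set is empty if `x ∉ ℝ₊ⁿ`). -/
def Fop {n m : ℕ} (A : Matrix (Fin m) (Fin n) ℝ) (b : Fin m → ℝ) (c : Fin n → ℝ)
    (z : (Fin n → ℝ) × (Fin m → ℝ)) : Set ((Fin n → ℝ) × (Fin m → ℝ)) :=
  {w | (∀ i, 0 ≤ z.1 i) ∧ ∃ g : Fin n → ℝ,
    (∀ u : Fin n → ℝ, (∀ i, 0 ≤ u i) → g ⬝ᵥ (u - z.1) ≤ 0) ∧
    w = (c - Aᵀ *ᵥ z.2 + g, A *ᵥ z.1 - b)}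

/-- `dist₂(0, F(z)) = inf {‖w‖₂ : w ∈ F(z)}`. -/
def distF {n m : ℕ} (A : Matrix (Fin m) (Fin n) ℝ) (b : Fin m → ℝ) (c : Fin n → ℝ)
    (z : (Fin n → ℝ) × (Fin m → ℝ)) : ℝ :=
  sInf (nrmP '' Fop A b c z)


section StmtHelpers

lemma dot_self_nonneg' {k : ℕ} (v : Fin k → ℝ) : 0 ≤ v ⬝ᵥ v :=
  Finset.sum_nonneg fun _ _ => mul_self_nonneg _
lemma nrm_nonneg {k : ℕ} (v : Fin k → ℝ) : 0 ≤ nrm v := Real.sqrt_nonneg _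
lemma nrm_sq {k : ℕ} (v : Fin k → ℝ) : nrm v ^ 2 = v ⬝ᵥ v := Real.sq_sqrt (dot_self_nonneg' v)
lemma dot_le_nrm {k : ℕ} (v w : Fin k → ℝ) : v ⬝ᵥ w ≤ nrm v * nrm w := by
  have := Real.sum_mul_le_sqrt_mul_sqrt Finset.univ v w
  simpa [nrm, dotProduct, sq] using this
lemma neg_dot_le_nrm {k : ℕ} (v w : Fin k → ℝ) : -(v ⬝ᵥ w) ≤ nrm v * nrm w := by
  have := dot_le_nrm (-v) w
  have hn : nrm (-v) = nrm v := by simp [nrm]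
  simpa [hn, neg_dotProduct] using this
lemma nrm_smul {k : ℕ} (c : ℝ) (v : Fin k → ℝ) : nrm (c • v) = |c| * nrm v := by
  simp only [nrm, smul_dotProduct, dotProduct_smul, smul_eq_mul, ← mul_assoc]
  rw [show c * c = |c| ^ 2 by rw [sq_abs]; ring, mul_comm (|c| ^ 2),
    Real.sqrt_mul (dot_self_nonneg' v), Real.sqrt_sq (abs_nonneg c), mul_comm]
lemma nrm_eq_zero {k : ℕ} {v : Fin k → ℝ} (h : nrm v = 0) : v = 0 := by
  have h2 : v ⬝ᵥ v = 0 := by have := nrm_sq v; rw [h] at this; simpa using this.symm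
  funext i
  have := (Finset.sum_eq_zero_iff_of_nonneg
    (fun j _ => mul_self_nonneg (v j))).1 h2 i (Finset.mem_univ i)
  simpa [mul_self_eq_zero] using this

lemma nrm_mulVec_le {n m : ℕ} (A : Matrix (Fin m) (Fin n) ℝ) (x : Fin n → ℝ) :
    nrm (A *ᵥ x) ≤ specNorm A * nrm x := by
  set F := Real.sqrt (∑ i, ∑ j, (A i j) ^ 2) with hF
  have hfrob : ∀ y : Fin n → ℝ, nrm (A *ᵥ y) ≤ F * nrm y := by
    intro y
    rw [nrm, nrm, ← Real.sqrt_mul (by positivity)]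
    apply Real.sqrt_le_sqrt
    calc (A *ᵥ y) ⬝ᵥ (A *ᵥ y) = ∑ i, (∑ j, A i j * y j) * (∑ j, A i j * y j) := rfl
      _ ≤ ∑ i, (∑ j, (A i j) ^ 2) * (∑ j, (y j) ^ 2) := by
          apply Finset.sum_le_sum
          intro i _
          have := Finset.sum_mul_sq_le_sq_mul_sq Finset.univ (fun j => A i j) y
          nlinarith [this, sq_nonneg (∑ j, A i j * y j)]
      _ = (∑ i, ∑ j, (A i j) ^ 2) * (y ⬝ᵥ y) := by
          rw [← Finset.sum_mul]; congr 1; simp [dotProduct, sq]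
  have hbdd : BddAbove {r | ∃ x : Fin n → ℝ, nrm x = 1 ∧ r = nrm (A *ᵥ x)} := by
    refine ⟨F, fun r hr => ?_⟩
    obtain ⟨y, hy1, rfl⟩ := hr
    have := hfrob y
    rw [hy1, mul_one] at this; exact this
  rcases eq_or_ne (nrm x) 0 with hx | hx
  · rw [nrm_eq_zero hx]; simp [nrm]
  · have hxpos : 0 < nrm x := lt_of_le_of_ne (nrm_nonneg x) (Ne.symm hx)
    set u := (nrm x)⁻¹ • x with hu
    have hun : nrm u = 1 := by
      rw [hu, nrm_smul, abs_of_nonneg (inv_nonneg.2 hxpos.le), inv_mul_cancel₀ hx]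
    have hmem : nrm (A *ᵥ u) ∈ {r | ∃ x : Fin n → ℝ, nrm x = 1 ∧ r = nrm (A *ᵥ x)} :=
      ⟨u, hun, rfl⟩
    have hle : nrm (A *ᵥ u) ≤ specNorm A := le_csSup hbdd hmem
    have hax : A *ᵥ x = nrm x • (A *ᵥ u) := by
      rw [hu, Matrix.mulVec_smul, smul_smul, mul_inv_cancel₀ hx, one_smul]
    rw [hax, nrm_smul, abs_of_nonneg hxpos.le]
    calc nrm x * nrm (A *ᵥ u) ≤ nrm x * specNorm A :=
          mul_le_mul_of_nonneg_left hle hxpos.le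
      _ = specNorm A * nrm x := mul_comm _ _

lemma adj_dot {n m : ℕ} (A : Matrix (Fin m) (Fin n) ℝ) (y : Fin m → ℝ) (x : Fin n → ℝ) :
    (Aᵀ *ᵥ y) ⬝ᵥ x = y ⬝ᵥ (A *ᵥ x) := by
  rw [Matrix.mulVec_transpose, ← Matrix.dotProduct_mulVec]

lemma psd_scaled {n m : ℕ} (A : Matrix (Fin m) (Fin n) ℝ) {η : ℝ} (hη0 : 0 < η)
    (hηS : η * specNorm A ≤ 1) (u : Fin n → ℝ) (v : Fin m → ℝ) :
    0 ≤ u ⬝ᵥ u + 2 * η * (v ⬝ᵥ (A *ᵥ u)) + v ⬝ᵥ v := by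
  have hAu := nrm_mulVec_le A u
  have hcs := neg_dot_le_nrm v (A *ᵥ u)
  have h1 : nrm v * nrm (A *ᵥ u) ≤ nrm v * (specNorm A * nrm u) :=
    mul_le_mul_of_nonneg_left hAu (nrm_nonneg v)
  have hu2 := nrm_sq u
  have hv2 := nrm_sq v
  nlinarith [sq_nonneg (nrm u - nrm v), nrm_nonneg u, nrm_nonneg v,
    mul_nonneg (nrm_nonneg u) (nrm_nonneg v), sq_nonneg (nrm u + nrm v),
    mul_le_mul_of_nonneg_right hηS (mul_nonneg (nrm_nonneg u) (nrm_nonneg v)),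
    mul_le_mul_of_nonneg_left h1 hη0.le]

lemma posPt_nonneg {k : ℕ} (v : Fin k → ℝ) (i : Fin k) : 0 ≤ posPt v i := le_max_right _ _

lemma projVI {k : ℕ} (v u : Fin k → ℝ) (hu : ∀ i, 0 ≤ u i) :
    (v - posPt v) ⬝ᵥ (u - posPt v) ≤ 0 := by
  apply Finset.sum_nonpos
  intro i _
  simp only [Pi.sub_apply, posPt]
  rcases le_or_gt (v i) 0 with h | h
  · rw [max_eq_right h]
    simpa using mul_nonpos_of_nonpos_of_nonneg (by linarith) (by simpa using hu i)
  · rw [max_eq_left h.le]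
    simp

end StmtHelpers

end

/-- the fixed-point residual of PDHG with `η < 1/‖A‖₂` is non-increasing
in the `P`-seminorm: `‖zᵏ⁺² − zᵏ⁺¹‖_P ≤ ‖zᵏ⁺¹ − zᵏ‖_P` for every `k ≥ 0`. -/
theorem stmt19 {n m : ℕ} (A : Matrix (Fin m) (Fin n) ℝ) (b : Fin m → ℝ) (c : Fin n → ℝ)
    (η : ℝ) (hη0 : 0 < η) (hη : η < 1 / specNorm A)
    (z : ℕ → (Fin n → ℝ) × (Fin m → ℝ))
    (hiter : ∀ k : ℕ, z (k + 1) = pdhgStep A b c η (z k)) :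
    ∀ k : ℕ, Pnorm A η (z (k + 2) - z (k + 1)) ≤ Pnorm A η (z (k + 1) - z k) := by
  -- η · specNorm A ≤ 1
  have hηS : η * specNorm A ≤ 1 := by
    rcases le_or_gt (specNorm A) 0 with hS | hS
    · nlinarith
    · have := (lt_div_iff₀ hS).mp hη
      linarith
  intro k
  set x1 := (z k).1 with hx1d
  set y1 := (z k).2 with hy1d
  set x2 := (z (k + 1)).1 with hx2d
  set y2 := (z (k + 1)).2 with hy2d
  set x3 := (z (k + 2)).1 with hx3d
  set y3 := (z (k + 2)).2 with hy3d
  have e1 := hiter k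
  have e2 := hiter (k + 1)
  simp only [pdhgStep] at e1 e2
  have hx2 : x2 = posPt (x1 + η • (Aᵀ *ᵥ y1) - η • c) := by
    rw [hx2d, e1]
  have hy2 : y2 = y1 - η • (A *ᵥ ((2 : ℝ) • x2 - x1)) + η • b := by
    rw [hy2d, e1, hx2]
  have hx3 : x3 = posPt (x2 + η • (Aᵀ *ᵥ y2) - η • c) := by
    rw [hx3d, show k + 2 = (k + 1) + 1 from rfl, e2]
  have hy3 : y3 = y2 - η • (A *ᵥ ((2 : ℝ) • x3 - x2)) + η • b := by
    rw [hy3d, show k + 2 = (k + 1) + 1 from rfl, e2, hx3]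
  -- projection variational inequalities
  have h1 : ((x1 + η • (Aᵀ *ᵥ y1) - η • c) - x2) ⬝ᵥ (x3 - x2) ≤ 0 := by
    have := projVI (x1 + η • (Aᵀ *ᵥ y1) - η • c) x3 (by rw [hx3]; exact posPt_nonneg _)
    rwa [← hx2] at this
  have h2 : ((x2 + η • (Aᵀ *ᵥ y2) - η • c) - x3) ⬝ᵥ (x2 - x3) ≤ 0 := by
    have := projVI (x2 + η • (Aᵀ *ᵥ y2) - η • c) x2 (by rw [hx2]; exact posPt_nonneg _)
    rwa [← hx3] at this
  -- dual update identity, dotted with dy' = y3 - y2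
  have hdy : y3 - y2 = (y2 - y1) - η • (A *ᵥ ((2 : ℝ) • (x3 - x2) - (x2 - x1))) := by
    rw [hy3, hy2]
    simp only [Matrix.mulVec_sub, Matrix.mulVec_add, Matrix.mulVec_smul, smul_sub, smul_add]
    abel
  have heq : (y3 - y2) ⬝ᵥ (y3 - y2)
      = (y3 - y2) ⬝ᵥ (y2 - y1)
        - η * ((y3 - y2) ⬝ᵥ (A *ᵥ ((2 : ℝ) • (x3 - x2) - (x2 - x1)))) := by
    calc (y3 - y2) ⬝ᵥ (y3 - y2)
        = (y3 - y2) ⬝ᵥ ((y2 - y1) - η • (A *ᵥ ((2 : ℝ) • (x3 - x2) - (x2 - x1)))) := by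
          rw [← hdy]
      _ = _ := by rw [dotProduct_sub, dotProduct_smul, smul_eq_mul]
  -- positive semidefiniteness at d⁺ - d
  have hpsd := psd_scaled A hη0 hηS ((x3 - x2) - (x2 - x1)) ((y3 - y2) - (y2 - y1))
  -- scaled quadratic form inequality
  have key : η * Pquad A η (z (k + 2) - z (k + 1)) ≤ η * Pquad A η (z (k + 1) - z k) := by
    have hsc : ∀ w : (Fin n → ℝ) × (Fin m → ℝ),
        η * Pquad A η w = w.1 ⬝ᵥ w.1 + 2 * η * (w.2 ⬝ᵥ (A *ᵥ w.1)) + w.2 ⬝ᵥ w.2 := by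
      intro w; unfold Pquad; field_simp
    rw [hsc, hsc]
    have hc1 : (z (k + 2) - z (k + 1)).1 = x3 - x2 := rfl
    have hc2 : (z (k + 2) - z (k + 1)).2 = y3 - y2 := rfl
    have hc3 : (z (k + 1) - z k).1 = x2 - x1 := rfl
    have hc4 : (z (k + 1) - z k).2 = y2 - y1 := rfl
    rw [hc1, hc2, hc3, hc4]
    simp only [Matrix.mulVec_sub, Matrix.mulVec_add, Matrix.mulVec_smul,
      dotProduct_add, add_dotProduct, dotProduct_sub, sub_dotProduct,
      dotProduct_smul, smul_dotProduct, smul_eq_mul, adj_dot] at h1 h2 heq hpsd ⊢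
    linarith [h1, h2, heq, hpsd,
      dotProduct_comm x1 x2, dotProduct_comm x1 x3, dotProduct_comm x2 x3,
      dotProduct_comm y1 y2, dotProduct_comm y1 y3, dotProduct_comm y2 y3]
  have hq : Pquad A η (z (k + 2) - z (k + 1)) ≤ Pquad A η (z (k + 1) - z k) :=
    le_of_mul_le_mul_left key hη0
  exact Real.sqrt_le_sqrt hq
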